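/- arXiv:1908.03827 — 2 statements merged into one kernel-verified Lean document; each statement's English description precedes it below -/
import Mathlib

section
/- Fix an initial state ξ in 𝔹_T^N. For every transient state x ∈ 𝔹_T^N, the stationary probability π_⟲(ξ)(x) of the amended Markov chain with reset probability u is differentiable in u at u = 0, and its derivative there equals the sojourn time t_ξ(x): (d/du)|_{u=0} π_⟲(ξ)(x) = t_ξ(x). -/
/-!
On transient states the amended chain moves exactly like the original one, whose restriction `Q`
to `𝔹_T^N` is substochastic. By the Fixation Axiom some power `Q^m` has all row sums `< 1`, so the
Neumann series `S = ∑ₜ Qᵗ` converges and `S ξ x = t_ξ(x)`. A stationary distribution `π` of the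
amended chain satisfies `π = u w δ_ξ + π Q` on transient states, `w` being its mass on `{𝐀, 𝐁}`;
hence `π = u w δ_ξ S` there, and normalization gives `w (1 + u ∑_y t_ξ(y)) = 1`. Thus
`π(x) = u t_ξ(x) / (1 + u ∑_y t_ξ(y))`, whose derivative at `u = 0` is `t_ξ(x)`.
-/

open Finset Filter Asymptotics Topology

namespace Evo

/-- A population state: each of the `N` individuals has type `A` (`true`) or `B` (`false`). -/
abbrev St (N : ℕ) := Fin N → Bool

/-- A replacement event `(R, α)`: the set `R` of replaced individuals together with a
parentage map (only the values on `R` are relevant). -/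
abbrev Event (N : ℕ) := Finset (Fin N) × (Fin N → Fin N)

/-- The extended parentage map `α̃`, equal to `α` on `R` and the identity off `R`. -/
def extMap {N : ℕ} (e : Event N) (i : Fin N) : Fin N := if i ∈ e.1 then e.2 i else i

/-- The state update induced by a replacement event: `x ↦ x_α̃`. -/
def upd {N : ℕ} (e : Event N) (x : St N) : St N := fun i => x (extMap e i)

/-- Boolean values as reals. -/
def bv (b : Bool) : ℝ := if b then 1 else 0

/-- The all-`A` state. -/
def stA (N : ℕ) : St N := fun _ => true

/-- The all-`B` state. -/
def stB (N : ℕ) : St N := fun _ => false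

/-- Transient (non-monoallelic) states, i.e. members of `𝔹_T^N`. -/
def Transient {N : ℕ} (x : St N) : Prop := x ≠ stA N ∧ x ≠ stB N

/-- A replacement rule: for each state, a probability distribution over replacement events. -/
def IsRule {N : ℕ} (p : St N → Event N → ℝ) : Prop :=
  (∀ x e, 0 ≤ p x e) ∧ ∀ x, ∑ e : Event N, p x e = 1

/-- A state-independent distribution over replacement events (a neutral replacement rule). -/
def IsDist {N : ℕ} (p0 : Event N → ℝ) : Prop :=
  (∀ e, 0 ≤ p0 e) ∧ ∑ e : Event N, p0 e = 1

/-- Transition matrix of the Markov chain induced by a replacement rule. -/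
def tmat {N : ℕ} (p : St N → Event N → ℝ) : Matrix (St N) (St N) ℝ :=
  Matrix.of fun x y => ∑ e : Event N, if upd e x = y then p x e else 0

/-- The Fixation Axiom. -/
def FixAxiom {N : ℕ} (p : St N → Event N → ℝ) : Prop :=
  ∃ (i : Fin N) (m : ℕ) (ev : Fin m → Event N), 1 ≤ m ∧
    (∀ k x, 0 < p x (ev k)) ∧ (∃ k, i ∈ (ev k).1) ∧
    (∀ j, (List.ofFn fun k => extMap (ev k)).foldr (· ∘ ·) id j = i)

/-- The sojourn time `t_ξ(x)`: expected number of visits to `x` prior to absorption,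
starting from `ξ` (expressed as `Σ_t (P^t)(ξ, x)`). -/
noncomputable def sojourn {N : ℕ} (p : St N → Event N → ℝ) (ξ x : St N) : ℝ :=
  ∑' t : ℕ, (tmat p ^ t) ξ x

/-- The amended transition matrix `P^⟲(ξ)`: from the monoallelic states the chain resets to
`ξ` with probability `u`, and otherwise follows the original chain (scaled by `1 - u`). -/
def amend {N : ℕ} (p : St N → Event N → ℝ) (ξ : St N) (u : ℝ) : Matrix (St N) (St N) ℝ :=
  Matrix.of fun x y =>
    if x = stA N ∨ x = stB N then (if y = ξ then u else (1 - u) * tmat p x y)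
    else tmat p x y

/-- `q` is a stationary distribution for the transition matrix `P`. -/
def IsStat {N : ℕ} (P : Matrix (St N) (St N) ℝ) (q : St N → ℝ) : Prop :=
  (∀ x, 0 ≤ q x) ∧ (∑ x : St N, q x = 1) ∧ ∀ y, ∑ x : St N, q x * P x y = q y

end Evo

theorem hasDerivAt_mul_div_one_add_mul (a b : ℝ) :
    HasDerivAt (fun u => u * a / (1 + u * b)) a 0 := by
  simpa using ((hasDerivAt_id (0 : ℝ)).mul_const a).fun_div
    (((hasDerivAt_id (0 : ℝ)).mul_const b).const_add 1) (by simp)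

theorem summable_pow_of_norm_pow_lt_one {R : Type*} [NormedRing R] [CompleteSpace R] {x : R}
    {m : ℕ} [NeZero m] (h : ‖x ^ m‖ < 1) : Summable (x ^ ·) := by
  have hblocks : Summable fun kj : ℕ × Fin m => (x ^ m) ^ kj.1 * x ^ (kj.2 : ℕ) :=
    summable_mul_of_summable_norm (f := ((x ^ m) ^ ·)) (g := fun j : Fin m => x ^ (j : ℕ))
      (summable_norm_geometric_of_norm_lt_one h) .of_finite
  refine (Nat.divModEquiv m).symm.summable_iff.mp ?_
  convert hblocks using 2 with kj
  simp [pow_add, pow_mul']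

namespace Matrix

variable {ι R : Type*} [Fintype ι] [DecidableEq ι]

theorem eq_vecMul_tsum_pow [Ring R] [TopologicalSpace R] [IsTopologicalRing R] [T2Space R]
    {Q : Matrix ι ι R} (hQ : Summable (Q ^ ·)) {v b : ι → R} (hv : v = b + v ᵥ* Q) :
    v = b ᵥ* ∑' t, Q ^ t := by
  have hb : b = v ᵥ* (1 - Q) := by
    rw [vecMul_sub, vecMul_one]; exact eq_sub_of_add_eq hv.symm
  rw [hb, vecMul_vecMul, hQ.one_sub_mul_tsum_pow, vecMul_one]

theorem toBlock_pow_of_toBlock_compl_eq_zero [CommRing R] (M : Matrix ι ι R) (q : ι → Prop)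
    [DecidablePred q] (hM : M.toBlock (fun i => ¬q i) q = 0) (t : ℕ) :
    (M ^ t).toBlock q q = M.toBlock q q ^ t := by
  induction t with
  | zero => simp [toBlock_one_self]
  | succ t ih => rw [pow_succ, toBlock_mul_eq_add _ q, hM, Matrix.mul_zero, add_zero, ih, pow_succ]

theorem summable_pow_toBlock_of_forall_exists_pow_pos {P : Matrix ι ι ℝ}
    (hP : P ∈ rowStochastic ℝ ι) (q : ι → Prop) [DecidablePred q]
    (hclosed : P.toBlock (fun i => ¬q i) q = 0) {m : ℕ} [NeZero m]
    (hexit : ∀ i, q i → ∃ j, ¬q j ∧ 0 < (P ^ m) i j) :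
    Summable (P.toBlock q q ^ ·) := by
  have hrow (i : {i // q i}) : ∑ j : {j // q j}, (P ^ m) i j < 1 := by
    have hsum := sum_row_of_mem_rowStochastic (pow_mem hP m) i
    rw [← Fintype.sum_subtype_add_sum_subtype q] at hsum
    obtain ⟨j, hj, hpos⟩ := hexit i i.2
    have hle : (P ^ m) i j ≤ ∑ k : {k // ¬q k}, (P ^ m) i k :=
      single_le_sum (f := fun k : {k // ¬q k} => (P ^ m) i k)
        (fun k _ => nonneg_of_mem_rowStochastic (pow_mem hP m)) (mem_univ ⟨j, hj⟩)
    linarith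
  let _ : NormedRing (Matrix {i // q i} {i // q i} ℝ) := Matrix.linftyOpNormedRing
  let _ : NormedSpace ℝ (Matrix {i // q i} {i // q i} ℝ) := Matrix.linftyOpNormedSpace
  have _ : CompleteSpace (Matrix {i // q i} {i // q i} ℝ) := FiniteDimensional.complete ℝ _
  refine summable_pow_of_norm_pow_lt_one (m := m) ?_
  rw [← toBlock_pow_of_toBlock_compl_eq_zero P q hclosed, linfty_opNorm_def, NNReal.coe_lt_one,
    Finset.sup_lt_iff zero_lt_one]
  intro i _
  rw [← NNReal.coe_lt_coe, NNReal.coe_sum]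
  simpa [abs_of_nonneg (nonneg_of_mem_rowStochastic (pow_mem hP m))] using hrow i

end Matrix

namespace Evo

open scoped Matrix

variable {N : ℕ} {p : St N → Event N → ℝ}

instance (N : ℕ) : DecidablePred (Transient (N := N)) := fun _ =>
  inferInstanceAs (Decidable (_ ∧ _))

abbrev transientTmat (p : St N → Event N → ℝ) :
    Matrix {x : St N // Transient x} {x : St N // Transient x} ℝ :=
  (tmat p).toBlock Transient Transient

lemma eq_stA_or_eq_stB_of_not_transient {x : St N} (hx : ¬Transient x) :
    x = stA N ∨ x = stB N := by
  by_contra h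
  exact hx (not_or.mp h)

lemma upd_of_not_transient {x : St N} (hx : ¬Transient x) (e : Event N) : upd e x = x := by
  obtain rfl | rfl := eq_stA_or_eq_stB_of_not_transient hx <;> rfl

lemma not_transient_const (N : ℕ) (b : Bool) : ¬Transient (fun _ : Fin N => b) := by
  rintro ⟨hA, hB⟩
  cases b
  exacts [hB rfl, hA rfl]

lemma tmat_mem_rowStochastic (hp : IsRule p) : tmat p ∈ Matrix.rowStochastic ℝ (St N) := by
  refine Matrix.mem_rowStochastic_iff_sum.2 ⟨fun x y => sum_nonneg fun e _ => ?_, fun x => ?_⟩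
  · split_ifs
    exacts [hp.1 x e, le_rfl]
  · simp only [tmat, Matrix.of_apply]
    rw [sum_comm]
    simp [hp.2 x]

lemma tmat_eq_zero_of_not_transient (p : St N → Event N → ℝ) {x y : St N} (hx : ¬Transient x)
    (hy : Transient y) : tmat p x y = 0 := by
  simp only [tmat, Matrix.of_apply, upd_of_not_transient hx]
  exact sum_eq_zero fun e _ => if_neg (by rintro rfl; exact hx hy)

lemma toBlock_tmat_not_transient_eq_zero (p : St N → Event N → ℝ) :
    (tmat p).toBlock (fun x => ¬Transient x) Transient = 0 := by
  ext x y
  exact tmat_eq_zero_of_not_transient p x.2 y.2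

lemma le_tmat_upd (hp : IsRule p) (x : St N) (e : Event N) : p x e ≤ tmat p x (upd e x) :=
  single_le_sum (f := fun e' => if upd e' x = upd e x then p x e' else 0)
    (fun e' _ => by split_ifs; exacts [hp.1 x e', le_rfl]) (mem_univ e) |>.trans_eq' (if_pos rfl)

lemma tmat_pow_pos_of_forall_pos (hp : IsRule p) (L : List (Event N))
    (hL : ∀ e ∈ L, ∀ x, 0 < p x e) (x : St N) :
    0 < (tmat p ^ L.length) x (x ∘ (L.map extMap).foldr (· ∘ ·) id) := by
  induction L generalizing x with
  | nil => simp
  | cons e L ih =>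
    have hstep : 0 < tmat p x (upd e x) :=
      (hL e List.mem_cons_self x).trans_le (le_tmat_upd hp x e)
    have hrest := ih (fun e' he' => hL e' (List.mem_cons_of_mem e he')) (upd e x)
    rw [List.length_cons, pow_succ', Matrix.mul_apply]
    refine (mul_pos hstep hrest).trans_le ?_
    exact single_le_sum (f := fun y => tmat p x y * (tmat p ^ L.length) y _)
      (fun y _ => mul_nonneg (Matrix.nonneg_of_mem_rowStochastic (tmat_mem_rowStochastic hp))
        (Matrix.nonneg_of_mem_rowStochastic (pow_mem (tmat_mem_rowStochastic hp) _))) (mem_univ _)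

lemma exists_pow_pos_not_transient (hp : IsRule p) (hfix : FixAxiom p) :
    ∃ m, 0 < m ∧ ∀ x, ∃ y, ¬Transient y ∧ 0 < (tmat p ^ m) x y := by
  obtain ⟨i, m, ev, hm, hpos, -, hfixes⟩ := hfix
  refine ⟨m, hm, fun x => ⟨fun _ => x i, not_transient_const N (x i), ?_⟩⟩
  have h := tmat_pow_pos_of_forall_pos hp (List.ofFn ev)
    (fun e he => by obtain ⟨k, rfl⟩ := List.mem_ofFn.mp he; exact hpos k) x
  have hconst : x ∘ (List.ofFn (extMap ∘ ev)).foldr (· ∘ ·) id = fun _ => x i :=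
    funext fun j => congrArg x (hfixes j)
  rwa [List.length_ofFn, List.map_ofFn, hconst] at h

lemma summable_pow_transientTmat (hp : IsRule p) (hfix : FixAxiom p) :
    Summable (fun t : ℕ => transientTmat p ^ t) := by
  obtain ⟨m, hm, hexit⟩ := exists_pow_pos_not_transient hp hfix
  have : NeZero m := ⟨hm.ne'⟩
  exact Matrix.summable_pow_toBlock_of_forall_exists_pow_pos (tmat_mem_rowStochastic hp)
    Transient (toBlock_tmat_not_transient_eq_zero p) fun x _ => hexit x

lemma sojourn_eq_tsum_pow_transientTmat (hQ : Summable (fun t : ℕ => transientTmat p ^ t))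
    {ξ x : St N} (hξ : Transient ξ) (hx : Transient x) :
    sojourn p ξ x = (∑' t, transientTmat p ^ t) ⟨ξ, hξ⟩ ⟨x, hx⟩ := by
  rw [← (Pi.hasSum.mp (Pi.hasSum.mp hQ.hasSum ⟨ξ, hξ⟩) ⟨x, hx⟩).tsum_eq]
  refine tsum_congr fun t => ?_
  rw [← Matrix.toBlock_pow_of_toBlock_compl_eq_zero _ _ (toBlock_tmat_not_transient_eq_zero p)]
  rfl

lemma amend_apply_of_transient (p : St N → Event N → ℝ) (ξ : St N) (u : ℝ) {x : St N}
    (hx : Transient x) (y : St N) : amend p ξ u x y = tmat p x y := by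
  simp [amend, hx.1, hx.2]

lemma amend_apply_of_not_transient (p : St N → Event N → ℝ) (ξ : St N) (u : ℝ) {x y : St N}
    (hx : ¬Transient x) (hy : Transient y) : amend p ξ u x y = if y = ξ then u else 0 := by
  simp [amend, eq_stA_or_eq_stB_of_not_transient hx, tmat_eq_zero_of_not_transient p hx hy]

lemma IsStat.transient_eq {ξ : St N} {u : ℝ} {q : St N → ℝ} (hq : IsStat (amend p ξ u) q)
    (hξ : Transient ξ) :
    (fun y : {y // Transient y} => q y.1) =
      Pi.single ⟨ξ, hξ⟩ (u * ∑ x : {x // ¬Transient x}, q x.1) +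
        (fun y : {y // Transient y} => q y.1) ᵥ* transientTmat p := by
  funext y
  rw [← hq.2.2 y, ← Fintype.sum_subtype_add_sum_subtype Transient, add_comm, Pi.add_apply]
  congr 1
  · rw [sum_congr rfl fun x _ => congrArg (q x.1 * ·) (amend_apply_of_not_transient p ξ u x.2 y.2),
      Pi.single_apply]
    by_cases hy : y = ⟨ξ, hξ⟩
    · simp [hy, mul_sum, mul_comm]
    · simp [hy, Subtype.ext_iff.not.mp hy]
  · exact sum_congr rfl fun x _ => by rw [amend_apply_of_transient p ξ u x.2]; rfl

lemma IsStat.apply_eq_div {ξ x : St N} {u : ℝ} {q : St N → ℝ} (hq : IsStat (amend p ξ u) q)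
    (hQ : Summable fun t : ℕ => transientTmat p ^ t) (hξ : Transient ξ) (hx : Transient x) :
    q x = u * (∑' t, transientTmat p ^ t) ⟨ξ, hξ⟩ ⟨x, hx⟩ /
      (1 + u * ∑ y, (∑' t, transientTmat p ^ t) ⟨ξ, hξ⟩ y) := by
  set S := ∑' t, transientTmat p ^ t
  set w := ∑ y : {y // ¬Transient y}, q y.1
  have hv : (fun y : {y // Transient y} => q y.1) = (u * w) • S ⟨ξ, hξ⟩ := by
    rw [Matrix.eq_vecMul_tsum_pow hQ (hq.transient_eq hξ), Matrix.single_vecMul]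
    rfl
  have hmass : w * (1 + u * ∑ y, S ⟨ξ, hξ⟩ y) = 1 := by
    have htotal := hq.2.1
    rw [← Fintype.sum_subtype_add_sum_subtype Transient,
      sum_congr rfl fun y _ => congrFun hv y] at htotal
    simp only [Pi.smul_apply, smul_eq_mul, ← mul_sum] at htotal
    linear_combination htotal
  rw [show q x = u * w * S ⟨ξ, hξ⟩ ⟨x, hx⟩ from congrFun hv ⟨x, hx⟩,
    eq_div_iff (right_ne_zero_of_mul_eq_one hmass)]
  linear_combination (u * S ⟨ξ, hξ⟩ ⟨x, hx⟩) * hmass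

/-- for every transient `x`, the stationary probability of `x` in the amended
chain is (one-sidedly) differentiable in `u` at `u = 0`, with derivative the sojourn time
`t_ξ(x)`. -/
theorem statement0 {N : ℕ} (p : St N → Event N → ℝ) (hp : IsRule p)
    (hfix : FixAxiom p) (ξ : St N) (hξ : Transient ξ)
    (statDist : ℝ → St N → ℝ)
    (hstat : ∀ u ∈ Set.Ioc (0 : ℝ) 1, IsStat (amend p ξ u) (statDist u))
    (x : St N) (hx : Transient x) :
    ∃ f : ℝ → ℝ, (∀ u ∈ Set.Ioc (0 : ℝ) 1, f u = statDist u x) ∧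
      HasDerivWithinAt f (sojourn p ξ x) (Set.Ici 0) 0 := by
  have hQ := summable_pow_transientTmat hp hfix
  set S := ∑' t, transientTmat p ^ t
  set T := ∑ y, S ⟨ξ, hξ⟩ y
  refine ⟨fun u => u * S ⟨ξ, hξ⟩ ⟨x, hx⟩ / (1 + u * T),
    fun u hu => ((hstat u hu).apply_eq_div hQ hξ hx).symm, ?_⟩
  rw [sojourn_eq_tsum_pow_transientTmat hQ hξ hx]
  exact (hasDerivAt_mul_div_one_add_mul _ _).hasDerivWithinAt

end Evo
end

section
/- For any selection intensity δ ≥ 0 (in the domain of smoothness) and any initial state ξ ∈ 𝔹_T^N, the fixation probability of type A satisfies the exact identity ρ_A(ξ) = ξ̂ + ⟨Δ̂_sel⟩_ξ, where ξ̂ = Σ_i π_i ξ_i is the reproductive-value-weighted initial frequency and ⟨Δ̂_sel⟩_ξ = Σ_{t=0}^∞ E[Δ̂_sel(x^t) | x⁰ = ξ]. -/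
open Finset Filter Asymptotics Topology

namespace Evo

/-- The operator `⟨φ⟩_ξ = Σ_{t=0}^∞ E[φ(x^t) | x⁰ = ξ]` for the chain with rule `p`. -/
noncomputable def sgen {N : ℕ} (p : St N → Event N → ℝ) (ξ : St N) (φ : St N → ℝ) : ℝ :=
  ∑' t : ℕ, ∑ x : St N, (tmat p ^ t) ξ x * φ x

/-- The marginal probability `e_ij` that `i` transmits its offspring to `j`,
for a distribution `q` over replacement events. -/
def emarg {N : ℕ} (q : Event N → ℝ) (i j : Fin N) : ℝ :=
  ∑ e : Event N, if j ∈ e.1 ∧ e.2 j = i then q e else 0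

/-- `π` is the vector of reproductive values for the neutral rule `p°`:
`Σ_j e°_ij π_j = Σ_j e°_ji π_i` for all `i`, and `Σ_i π_i = 1`. -/
def IsRV {N : ℕ} (p0 : Event N → ℝ) (π : Fin N → ℝ) : Prop :=
  (∀ i, ∑ j, emarg p0 i j * π j = ∑ j, emarg p0 j i * π i) ∧ (∑ i, π i = 1)

/-- The reproductive-value-weighted frequency `x̂ = Σ_i π_i x_i`. -/
def hatx {N : ℕ} (π : Fin N → ℝ) (x : St N) : ℝ := ∑ i, π i * bv (x i)

/-- The multilinear monomial `x_I = Π_{i ∈ I} x_i`. -/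
def prodI {N : ℕ} (x : St N) (I : Finset (Fin N)) : ℝ := ∏ i ∈ I, bv (x i)

/-- The RV-weighted change due to selection,
`Δ̂_sel(x) = Σ_i π_i Σ_j (x_j − x_i) e_ji(x)`. -/
def dsel {N : ℕ} (π : Fin N → ℝ) (p : St N → Event N → ℝ) (x : St N) : ℝ :=
  ∑ i, π i * ∑ j, (bv (x j) - bv (x i)) * emarg (p x) j i

section Aux
variable {N : ℕ}

lemma tmat_apply (q : St N → Event N → ℝ) (x y : St N) :
    tmat q x y = ∑ e : Event N, if upd e x = y then q x e else 0 := rfl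

lemma tmat_nonneg {q : St N → Event N → ℝ} (hq : ∀ x e, 0 ≤ q x e) (x y : St N) :
    0 ≤ tmat q x y := by
  rw [tmat_apply]
  refine Finset.sum_nonneg fun e _ => ?_
  split
  · exact hq x e
  · exact le_rfl

lemma tmat_row {q : St N → Event N → ℝ} (hq : ∀ x, ∑ e : Event N, q x e = 1) (x : St N) :
    ∑ y, tmat q x y = 1 := by
  simp only [tmat_apply]
  rw [Finset.sum_comm]
  simp [Finset.sum_ite_eq, hq]

lemma pow_nonneg' {q : St N → Event N → ℝ} (hq : ∀ x e, 0 ≤ q x e) (t : ℕ) (x y : St N) :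
    0 ≤ (tmat q ^ t) x y := by
  induction t generalizing x y with
  | zero => simp [Matrix.one_apply]; split <;> norm_num
  | succ t ih =>
    rw [pow_succ', Matrix.mul_apply]
    exact Finset.sum_nonneg fun z _ => mul_nonneg (tmat_nonneg hq x z) (ih z y)

lemma pow_row {q : St N → Event N → ℝ} (hq0 : ∀ x e, 0 ≤ q x e)
    (hq : ∀ x, ∑ e : Event N, q x e = 1) (t : ℕ) (x : St N) :
    ∑ y, (tmat q ^ t) x y = 1 := by
  induction t generalizing x with
  | zero => simp [Matrix.one_apply]
  | succ t ih =>
    simp only [pow_succ', Matrix.mul_apply]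
    rw [Finset.sum_comm]
    calc ∑ z, ∑ y, tmat q x z * (tmat q ^ t) z y
        = ∑ z, tmat q x z * ∑ y, (tmat q ^ t) z y := by
          simp [Finset.mul_sum]
      _ = 1 := by simp [ih, tmat_row hq x]

lemma pow_le_one {q : St N → Event N → ℝ} (hq0 : ∀ x e, 0 ≤ q x e)
    (hq : ∀ x, ∑ e : Event N, q x e = 1) (t : ℕ) (x y : St N) :
    (tmat q ^ t) x y ≤ 1 := by
  rw [← pow_row hq0 hq t x]
  exact Finset.single_le_sum (fun z _ => pow_nonneg' hq0 t x z) (Finset.mem_univ y)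

end Aux
section Aux2
variable {N : ℕ}

lemma hatx_upd (π : Fin N → ℝ) (e : Event N) (x : St N) :
    hatx π (upd e x) = hatx π x
      + ∑ j, π j * (if j ∈ e.1 then bv (x (e.2 j)) - bv (x j) else 0) := by
  unfold hatx upd extMap
  rw [← Finset.sum_add_distrib]
  refine Finset.sum_congr rfl fun j _ => ?_
  split <;> ring

lemma step_hatx {q : St N → Event N → ℝ} (hq : ∀ x, ∑ e : Event N, q x e = 1)
    (π : Fin N → ℝ) (x : St N) :
    ∑ y, tmat q x y * hatx π y = hatx π x + dsel π q x := by
  simp only [tmat_apply, Finset.sum_mul, ite_mul, zero_mul]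
  rw [Finset.sum_comm]
  simp only [Finset.sum_ite_eq, Finset.mem_univ, if_true]
  have h1 : ∑ e : Event N, q x e * hatx π (upd e x)
      = (∑ e : Event N, q x e) * hatx π x
        + ∑ j, π j * ∑ e : Event N, (if j ∈ e.1 then bv (x (e.2 j)) - bv (x j) else 0) * q x e := by
    simp only [hatx_upd, mul_add, Finset.sum_add_distrib, ← Finset.sum_mul]
    congr 1
    simp only [Finset.mul_sum]
    rw [Finset.sum_comm]
    exact Finset.sum_congr rfl fun j _ => Finset.sum_congr rfl fun e _ => by ring
  rw [h1, hq x, one_mul]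
  congr 1
  unfold dsel emarg
  refine Finset.sum_congr rfl fun j _ => ?_
  congr 1
  simp only [Finset.mul_sum]
  rw [Finset.sum_comm]
  refine Finset.sum_congr rfl fun e _ => ?_
  simp only [ite_and, mul_ite, mul_zero]
  by_cases h : j ∈ e.1
  · simp only [h, if_true, ite_mul, zero_mul]
    rw [Finset.sum_ite_eq, if_pos (Finset.mem_univ _)]
  · simp [h]

lemma upd_stA (e : Event N) : upd e (stA N) = stA N := rfl

lemma upd_stB (e : Event N) : upd e (stB N) = stB N := rfl

lemma tmat_stA {q : St N → Event N → ℝ} (hq : ∀ x, ∑ e : Event N, q x e = 1) (y : St N) :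
    tmat q (stA N) y = if stA N = y then 1 else 0 := by
  rw [tmat_apply]
  simp only [upd_stA]
  rcases eq_or_ne (stA N) y with h | h
  · subst h; simp [hq]
  · simp [h]

lemma tmat_stB {q : St N → Event N → ℝ} (hq : ∀ x, ∑ e : Event N, q x e = 1) (y : St N) :
    tmat q (stB N) y = if stB N = y then 1 else 0 := by
  rw [tmat_apply]
  simp only [upd_stB]
  rcases eq_or_ne (stB N) y with h | h
  · subst h; simp [hq]
  · simp [h]

lemma pow_stA {q : St N → Event N → ℝ} (hq : ∀ x, ∑ e : Event N, q x e = 1) (t : ℕ) (y : St N) :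
    (tmat q ^ t) (stA N) y = if stA N = y then 1 else 0 := by
  induction t with
  | zero => simp [Matrix.one_apply]
  | succ t ih =>
    rw [pow_succ', Matrix.mul_apply]
    simp only [tmat_stA hq, ite_mul, one_mul, zero_mul]
    rw [Finset.sum_ite_eq, if_pos (Finset.mem_univ _), ih]

lemma pow_stB {q : St N → Event N → ℝ} (hq : ∀ x, ∑ e : Event N, q x e = 1) (t : ℕ) (y : St N) :
    (tmat q ^ t) (stB N) y = if stB N = y then 1 else 0 := by
  induction t with
  | zero => simp [Matrix.one_apply]
  | succ t ih =>
    rw [pow_succ', Matrix.mul_apply]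
    simp only [tmat_stB hq, ite_mul, one_mul, zero_mul]
    rw [Finset.sum_ite_eq, if_pos (Finset.mem_univ _), ih]

end Aux2
section Aux3
variable {N : ℕ}

/-- Apply a list of events in order. -/
def applyL : List (Event N) → St N → St N
  | [], x => x
  | e :: l, x => applyL l (upd e x)

/-- Probability of a given path of events. -/
noncomputable def probL (q : St N → Event N → ℝ) : List (Event N) → St N → ℝ
  | [], _ => 1
  | e :: l, x => q x e * probL q l (upd e x)

lemma probL_nonneg {q : St N → Event N → ℝ} (hq : ∀ x e, 0 ≤ q x e) :
    ∀ (l : List (Event N)) (x : St N), 0 ≤ probL q l x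
  | [], x => by rw [probL]; exact zero_le_one
  | e :: l, x => mul_nonneg (hq x e) (probL_nonneg hq l (upd e x))

lemma tmat_ge {q : St N → Event N → ℝ} (hq : ∀ x e, 0 ≤ q x e) (x : St N) (e : Event N) :
    q x e ≤ tmat q x (upd e x) := by
  rw [tmat_apply]
  have h := Finset.single_le_sum
    (f := fun e' : Event N => if upd e' x = upd e x then q x e' else 0)
    (fun e' _ => by split; exacts [hq x e', le_rfl]) (Finset.mem_univ e)
  simpa using h

lemma pow_path {q : St N → Event N → ℝ} (hq : ∀ x e, 0 ≤ q x e) :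
    ∀ (l : List (Event N)) (x : St N),
      probL q l x ≤ (tmat q ^ l.length) x (applyL l x)
  | [], x => by simp [probL, applyL, Matrix.one_apply]
  | e :: l, x => by
    have ih := pow_path hq l (upd e x)
    calc probL q (e :: l) x = q x e * probL q l (upd e x) := rfl
      _ ≤ tmat q x (upd e x) * (tmat q ^ l.length) (upd e x) (applyL l (upd e x)) := by
          apply mul_le_mul (tmat_ge hq x e) ih (probL_nonneg hq l _)
          exact tmat_nonneg hq x _
      _ ≤ ∑ y, tmat q x y * (tmat q ^ l.length) y (applyL l (upd e x)) := by
          exact Finset.single_le_sum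
            (f := fun y => tmat q x y * (tmat q ^ l.length) y (applyL l (upd e x)))
            (fun z _ => mul_nonneg (tmat_nonneg hq x z) (pow_nonneg' hq _ z _))
            (Finset.mem_univ (upd e x))
      _ = (tmat q ^ (e :: l).length) x (applyL (e :: l) x) := by
          rw [List.length_cons, pow_succ', Matrix.mul_apply]; rfl

lemma applyL_apply :
    ∀ (l : List (Event N)) (x : St N) (j : Fin N),
      applyL l x j = x ((l.map extMap).foldr (· ∘ ·) id j)
  | [], x, j => rfl
  | e :: l, x, j => by
    simp only [applyL, List.map_cons, List.foldr_cons]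
    rw [applyL_apply l (upd e x) j]
    rfl

lemma probL_ge {q : St N → Event N → ℝ} {c : ℝ} (hc : 0 ≤ c) :
    ∀ (l : List (Event N)), (∀ e ∈ l, ∀ y, c ≤ q y e) → ∀ x : St N,
      c ^ l.length ≤ probL q l x
  | [], _, x => by simp [probL]
  | e :: l, h, x => by
    have h1 : c ≤ q x e := h e List.mem_cons_self x
    have h2 := probL_ge hc l (fun e' he' y => h e' (List.mem_cons_of_mem e he') y) (upd e x)
    calc c ^ (e :: l).length = c * c ^ l.length := by rw [List.length_cons, pow_succ]; ring
      _ ≤ q x e * probL q l (upd e x) :=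
          mul_le_mul h1 h2 (pow_nonneg hc _) (le_trans hc h1)
      _ = probL q (e :: l) x := rfl

end Aux3
section Aux4
variable {N : ℕ}

/-- Probability mass on transient states at time `t`. -/
noncomputable def uu (q : St N → Event N → ℝ) (ξ : St N) (t : ℕ) : ℝ :=
  ∑ x ∈ Finset.univ \ {stA N, stB N}, (tmat q ^ t) ξ x

lemma uu_nonneg {q : St N → Event N → ℝ} (hq0 : ∀ x e, 0 ≤ q x e) (ξ : St N) (t : ℕ) :
    0 ≤ uu q ξ t :=
  Finset.sum_nonneg fun x _ => pow_nonneg' hq0 t ξ x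

lemma uu_le_one {q : St N → Event N → ℝ} (hq0 : ∀ x e, 0 ≤ q x e)
    (hq1 : ∀ x, ∑ e : Event N, q x e = 1) (ξ : St N) (t : ℕ) : uu q ξ t ≤ 1 := by
  rw [← pow_row hq0 hq1 t ξ]
  exact Finset.sum_le_sum_of_subset_of_nonneg (Finset.sdiff_subset)
    (fun x _ _ => pow_nonneg' hq0 t ξ x)

lemma uu_stA {q : St N → Event N → ℝ} (hq1 : ∀ x, ∑ e : Event N, q x e = 1) (t : ℕ) :
    uu q (stA N) t = 0 := by
  refine Finset.sum_eq_zero fun z hz => ?_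
  have hz' := (Finset.mem_sdiff.mp hz).2
  simp only [Finset.mem_insert, Finset.mem_singleton] at hz'
  rw [pow_stA hq1, if_neg fun h => hz' (Or.inl h.symm)]

lemma uu_stB {q : St N → Event N → ℝ} (hq1 : ∀ x, ∑ e : Event N, q x e = 1) (t : ℕ) :
    uu q (stB N) t = 0 := by
  refine Finset.sum_eq_zero fun z hz => ?_
  have hz' := (Finset.mem_sdiff.mp hz).2
  simp only [Finset.mem_insert, Finset.mem_singleton] at hz'
  rw [pow_stB hq1, if_neg fun h => hz' (Or.inr h.symm)]

lemma uu_add {q : St N → Event N → ℝ} (hq1 : ∀ x, ∑ e : Event N, q x e = 1)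
    (ξ : St N) (t s : ℕ) :
    uu q ξ (t + s) = ∑ x ∈ Finset.univ \ {stA N, stB N}, (tmat q ^ t) ξ x * uu q x s := by
  unfold uu
  rw [pow_add]
  simp only [Matrix.mul_apply]
  rw [Finset.sum_comm]
  have hD : ∑ x ∈ ({stA N, stB N} : Finset (St N)),
      ∑ z ∈ Finset.univ \ {stA N, stB N}, (tmat q ^ t) ξ x * (tmat q ^ s) x z = 0 := by
    refine Finset.sum_eq_zero fun x hx => ?_
    simp only [Finset.mem_insert, Finset.mem_singleton] at hx
    rcases hx with h | h <;> subst h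
    · rw [← Finset.mul_sum]
      have : uu q (stA N) s = 0 := uu_stA hq1 s
      unfold uu at this
      rw [this, mul_zero]
    · rw [← Finset.mul_sum]
      have : uu q (stB N) s = 0 := uu_stB hq1 s
      unfold uu at this
      rw [this, mul_zero]
  calc ∑ x : St N, ∑ z ∈ Finset.univ \ {stA N, stB N}, (tmat q ^ t) ξ x * (tmat q ^ s) x z
      = (∑ x ∈ Finset.univ \ {stA N, stB N},
          ∑ z ∈ Finset.univ \ {stA N, stB N}, (tmat q ^ t) ξ x * (tmat q ^ s) x z)
        + ∑ x ∈ ({stA N, stB N} : Finset (St N)),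
          ∑ z ∈ Finset.univ \ {stA N, stB N}, (tmat q ^ t) ξ x * (tmat q ^ s) x z :=
        (Finset.sum_sdiff (Finset.subset_univ _)).symm
    _ = ∑ x ∈ Finset.univ \ {stA N, stB N}, (tmat q ^ t) ξ x
          * ∑ z ∈ Finset.univ \ {stA N, stB N}, (tmat q ^ s) x z := by
        rw [hD, add_zero]
        exact Finset.sum_congr rfl fun x _ => (Finset.mul_sum _ _ _).symm

lemma uu_anti {q : St N → Event N → ℝ} (hq0 : ∀ x e, 0 ≤ q x e)
    (hq1 : ∀ x, ∑ e : Event N, q x e = 1) (ξ : St N) (t s : ℕ) :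
    uu q ξ (t + s) ≤ uu q ξ t := by
  rw [uu_add hq1]
  calc ∑ x ∈ Finset.univ \ {stA N, stB N}, (tmat q ^ t) ξ x * uu q x s
      ≤ ∑ x ∈ Finset.univ \ {stA N, stB N}, (tmat q ^ t) ξ x * 1 :=
        Finset.sum_le_sum fun x _ =>
          mul_le_mul_of_nonneg_left (uu_le_one hq0 hq1 x s) (pow_nonneg' hq0 t ξ x)
    _ = uu q ξ t := by simp [uu]

lemma uu_contract {q : St N → Event N → ℝ} (hq0 : ∀ x e, 0 ≤ q x e)
    (hq1 : ∀ x, ∑ e : Event N, q x e = 1) {ε : ℝ} {m : ℕ}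
    (habs : ∀ x : St N, uu q x m ≤ 1 - ε) (ξ : St N) (t : ℕ) :
    uu q ξ (t + m) ≤ (1 - ε) * uu q ξ t := by
  rw [uu_add hq1]
  calc ∑ x ∈ Finset.univ \ {stA N, stB N}, (tmat q ^ t) ξ x * uu q x m
      ≤ ∑ x ∈ Finset.univ \ {stA N, stB N}, (tmat q ^ t) ξ x * (1 - ε) :=
        Finset.sum_le_sum fun x _ =>
          mul_le_mul_of_nonneg_left (habs x) (pow_nonneg' hq0 t ξ x)
    _ = (1 - ε) * uu q ξ t := by rw [← Finset.sum_mul, mul_comm]; rfl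

end Aux4
section Aux5
variable {N : ℕ}

lemma uu_summable {q : St N → Event N → ℝ} (hq0 : ∀ x e, 0 ≤ q x e)
    (hq1 : ∀ x, ∑ e : Event N, q x e = 1) (hfix : FixAxiom q) (ξ : St N) :
    Summable (uu q ξ) := by
  obtain ⟨i, m, ev, hm, hpos, -, hcomp⟩ := hfix
  have hne : (Finset.univ : Finset (St N × Fin m)).Nonempty :=
    ⟨(stA N, ⟨0, hm⟩), Finset.mem_univ _⟩
  set c0 : ℝ := Finset.univ.inf' hne (fun pr : St N × Fin m => q pr.1 (ev pr.2)) with hc0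
  have hc0pos : 0 < c0 := (Finset.lt_inf'_iff hne).mpr fun b _ => hpos b.2 b.1
  have hc0le : ∀ (y : St N) (k : Fin m), c0 ≤ q y (ev k) := fun y k =>
    Finset.inf'_le _ (Finset.mem_univ (y, k))
  set ε : ℝ := c0 ^ m with hε
  have hεpos : 0 < ε := pow_pos hc0pos m
  set l : List (Event N) := List.ofFn ev with hl
  have hlen : l.length = m := List.length_ofFn
  -- the path leads to a monoallelic state
  have happly : ∀ x : St N, applyL l x = fun _ => x i := by
    intro x
    funext j
    rw [applyL_apply, hl, List.map_ofFn]
    exact congrArg x (hcomp j)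
  have hconst : ∀ x : St N, applyL l x ∈ ({stA N, stB N} : Finset (St N)) := by
    intro x
    rw [happly x]
    cases hxi : x i
    · exact Finset.mem_insert.mpr (Or.inr (Finset.mem_singleton.mpr rfl))
    · exact Finset.mem_insert.mpr (Or.inl rfl)
  -- the path has probability at least ε
  have hkey : ∀ x : St N, ε ≤ (tmat q ^ m) x (applyL l x) := by
    intro x
    have h1 : c0 ^ l.length ≤ probL q l x := by
      refine probL_ge hc0pos.le l (fun e he y => ?_) x
      obtain ⟨k, hk⟩ := List.mem_ofFn.mp he
      rw [← hk]
      exact hc0le y k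
    have h2 := pow_path hq0 l x
    rw [hlen] at h1 h2
    exact le_trans h1 h2
  -- contraction estimate
  have habs : ∀ x : St N, uu q x m ≤ 1 - ε := by
    intro x
    have hnotin : applyL l x ∉ Finset.univ \ ({stA N, stB N} : Finset (St N)) := by
      intro h
      exact (Finset.mem_sdiff.mp h).2 (hconst x)
    have h1 : uu q x m + (tmat q ^ m) x (applyL l x)
        = ∑ z ∈ insert (applyL l x) (Finset.univ \ ({stA N, stB N} : Finset (St N))),
            (tmat q ^ m) x z := by
      rw [Finset.sum_insert hnotin, add_comm]; rfl
    have h2 : ∑ z ∈ insert (applyL l x) (Finset.univ \ ({stA N, stB N} : Finset (St N))),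
        (tmat q ^ m) x z ≤ 1 := by
      rw [← pow_row hq0 hq1 m x]
      exact Finset.sum_le_sum_of_subset_of_nonneg (Finset.subset_univ _)
        (fun z _ _ => pow_nonneg' hq0 m x z)
    have h3 := hkey x
    have := h1 ▸ h2
    linarith
  have h1ε0 : 0 ≤ 1 - ε := le_trans (uu_nonneg hq0 (stA N) m) (habs (stA N))
  have h1ε1 : 1 - ε < 1 := by linarith
  -- geometric decay along multiples of m
  have hk : ∀ k : ℕ, uu q ξ (m * k) ≤ (1 - ε) ^ k := by
    intro k
    induction k with
    | zero => simpa using uu_le_one hq0 hq1 ξ 0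
    | succ k ih =>
      have : m * (k + 1) = m * k + m := by ring
      rw [this, pow_succ]
      calc uu q ξ (m * k + m) ≤ (1 - ε) * uu q ξ (m * k) := uu_contract hq0 hq1 habs ξ (m * k)
        _ ≤ (1 - ε) * (1 - ε) ^ k := mul_le_mul_of_nonneg_left ih h1ε0
        _ = (1 - ε) ^ k * (1 - ε) := mul_comm _ _
  have ht : ∀ t : ℕ, uu q ξ t ≤ (1 - ε) ^ (t / m) := by
    intro t
    calc uu q ξ t = uu q ξ (m * (t / m) + t % m) := by rw [Nat.div_add_mod]
      _ ≤ uu q ξ (m * (t / m)) := uu_anti hq0 hq1 ξ _ _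
      _ ≤ (1 - ε) ^ (t / m) := hk _
  -- partial sums are bounded
  have hblock : ∀ K : ℕ, ∑ t ∈ Finset.range (K * m), uu q ξ t
      ≤ ∑ k ∈ Finset.range K, (m : ℝ) * (1 - ε) ^ k := by
    intro K
    induction K with
    | zero => simp
    | succ K ih =>
      rw [Nat.succ_mul, Finset.sum_range_add, Finset.sum_range_succ]
      refine add_le_add ih ?_
      calc ∑ j ∈ Finset.range m, uu q ξ (K * m + j)
          ≤ ∑ _j ∈ Finset.range m, (1 - ε) ^ K := by
            refine Finset.sum_le_sum fun j _ => ?_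
            calc uu q ξ (K * m + j) ≤ uu q ξ (K * m) := uu_anti hq0 hq1 ξ _ _
              _ ≤ (1 - ε) ^ K := by rw [mul_comm]; exact hk K
        _ = (m : ℝ) * (1 - ε) ^ K := by
            rw [Finset.sum_const, Finset.card_range, nsmul_eq_mul]
  have hgeom : ∀ K : ℕ, ∑ k ∈ Finset.range K, (m : ℝ) * (1 - ε) ^ k ≤ m * ε⁻¹ := by
    intro K
    rw [← Finset.mul_sum]
    refine mul_le_mul_of_nonneg_left ?_ (by positivity)
    have := Summable.sum_le_tsum (Finset.range K) (fun k _ => pow_nonneg h1ε0 k)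
      (summable_geometric_of_lt_one h1ε0 h1ε1)
    rw [tsum_geometric_of_lt_one h1ε0 h1ε1] at this
    calc ∑ k ∈ Finset.range K, (1 - ε) ^ k ≤ (1 - (1 - ε))⁻¹ := this
      _ = ε⁻¹ := by ring_nf
  refine summable_of_sum_range_le (c := (m : ℝ) * ε⁻¹) (fun t => uu_nonneg hq0 ξ t) (fun n => ?_)
  calc ∑ t ∈ Finset.range n, uu q ξ t
      ≤ ∑ t ∈ Finset.range ((n / m + 1) * m), uu q ξ t := by
        refine Finset.sum_le_sum_of_subset_of_nonneg ?_ (fun t _ _ => uu_nonneg hq0 ξ t)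
        refine Finset.range_subset_range.mpr ?_
        have h1 : n % m < m := Nat.mod_lt _ (by omega)
        have h2 : m * (n / m) + n % m = n := Nat.div_add_mod n m
        calc n ≤ m * (n / m) + m := by omega
          _ = (n / m + 1) * m := by ring
    _ ≤ ∑ k ∈ Finset.range (n / m + 1), (m : ℝ) * (1 - ε) ^ k := hblock _
    _ ≤ m * ε⁻¹ := hgeom _

end Aux5
/-- the exact identity `ρ_A(ξ) = ξ̂ + ⟨Δ̂_sel⟩_ξ`, for any selection intensity
`δ ≥ 0` in the domain of smoothness. -/
theorem statement4 {N : ℕ} (p : ℝ → St N → Event N → ℝ) (δ : ℝ) (hδ : 0 ≤ δ)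
    (hrule : IsRule (p δ)) (hfix : FixAxiom (p δ))
    (hsm : ∀ x e, ContDiffAt ℝ (⊤ : ℕ∞) (fun d => p d x e) 0)
    (p0 : Event N → ℝ) (hneut : ∀ x e, p 0 x e = p0 e)
    (π : Fin N → ℝ) (hπ : IsRV p0 π)
    (ξ : St N) (hξ : Transient ξ)
    (ρ : ℝ)
    (hρ : Tendsto (fun t : ℕ => (tmat (p δ) ^ t) ξ (stA N)) atTop (𝓝 ρ)) :
    ρ = hatx π ξ + sgen (p δ) ξ (dsel π (p δ)) := by
  obtain ⟨hq0, hq1⟩ := hrule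
  have hAB : stA N ≠ stB N := by
    obtain ⟨i, -⟩ := hfix
    intro h
    have h2 := congrFun h i
    simp [stA, stB] at h2
  have hsummu : Summable (uu (p δ) ξ) := uu_summable hq0 hq1 hfix ξ
  have hmu0 : Tendsto (uu (p δ) ξ) atTop (𝓝 0) := hsummu.tendsto_atTop_zero
  -- dsel vanishes at absorbing states
  have hdselA : dsel π (p δ) (stA N) = 0 := by simp [dsel, stA]
  have hdselB : dsel π (p δ) (stB N) = 0 := by simp [dsel, stB]
  have h1A : hatx π (stA N) = 1 := by
    have : hatx π (stA N) = ∑ i, π i := by simp [hatx, stA, bv]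
    rw [this, hπ.2]
  have h0B : hatx π (stB N) = 0 := by simp [hatx, stB, bv]
  -- bounds
  set M : ℝ := ∑ x : St N, |dsel π (p δ) x| with hM
  have hMb : ∀ x : St N, |dsel π (p δ) x| ≤ M :=
    fun x => Finset.single_le_sum (f := fun y : St N => |dsel π (p δ) y|)
      (fun y _ => abs_nonneg _) (Finset.mem_univ x)
  set M2 : ℝ := ∑ x : St N, |hatx π x| with hM2
  have hM2b : ∀ x : St N, |hatx π x| ≤ M2 :=
    fun x => Finset.single_le_sum (f := fun y : St N => |hatx π y|)
      (fun y _ => abs_nonneg _) (Finset.mem_univ x)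
  -- sums over all states reduce to transient states
  have hsplit : ∀ (T : ℕ) (φ : St N → ℝ),
      ∑ x : St N, (tmat (p δ) ^ T) ξ x * φ x
        = (∑ x ∈ Finset.univ \ ({stA N, stB N} : Finset (St N)), (tmat (p δ) ^ T) ξ x * φ x)
          + ((tmat (p δ) ^ T) ξ (stA N) * φ (stA N) + (tmat (p δ) ^ T) ξ (stB N) * φ (stB N)) := by
    intro T φ
    rw [← Finset.sum_sdiff (Finset.subset_univ ({stA N, stB N} : Finset (St N)))]
    congr 1
    exact Finset.sum_pair hAB
  -- bound on the transient part of such sums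
  have htrb : ∀ (T : ℕ) (φ : St N → ℝ) (C : ℝ), (∀ x, |φ x| ≤ C) →
      |∑ x ∈ Finset.univ \ ({stA N, stB N} : Finset (St N)), (tmat (p δ) ^ T) ξ x * φ x|
        ≤ C * uu (p δ) ξ T := by
    intro T φ C hC
    calc |∑ x ∈ Finset.univ \ ({stA N, stB N} : Finset (St N)), (tmat (p δ) ^ T) ξ x * φ x|
        ≤ ∑ x ∈ Finset.univ \ ({stA N, stB N} : Finset (St N)), |(tmat (p δ) ^ T) ξ x * φ x| :=
          Finset.abs_sum_le_sum_abs _ _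
      _ ≤ ∑ x ∈ Finset.univ \ ({stA N, stB N} : Finset (St N)), (tmat (p δ) ^ T) ξ x * C := by
          refine Finset.sum_le_sum fun x _ => ?_
          rw [abs_mul, abs_of_nonneg (pow_nonneg' hq0 T ξ x)]
          exact mul_le_mul_of_nonneg_left (hC x) (pow_nonneg' hq0 T ξ x)
      _ = C * uu (p δ) ξ T := by rw [← Finset.sum_mul, mul_comm]; rfl
  -- the per-step expected increment
  have hgb : ∀ t, |∑ x : St N, (tmat (p δ) ^ t) ξ x * dsel π (p δ) x| ≤ M * uu (p δ) ξ t := by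
    intro t
    rw [hsplit t (dsel π (p δ)), hdselA, hdselB, mul_zero, mul_zero, add_zero, add_zero]
    exact htrb t _ M hMb
  have hsumg : Summable (fun t => ∑ x : St N, (tmat (p δ) ^ t) ξ x * dsel π (p δ) x) := by
    refine Summable.of_abs ?_
    exact Summable.of_nonneg_of_le (fun t => abs_nonneg _) hgb (hsummu.mul_left M)
  -- one-step recursion for the expected RV-weighted frequency
  have hstep : ∀ T : ℕ, ∑ x : St N, (tmat (p δ) ^ (T + 1)) ξ x * hatx π x
      = (∑ x : St N, (tmat (p δ) ^ T) ξ x * hatx π x)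
        + ∑ x : St N, (tmat (p δ) ^ T) ξ x * dsel π (p δ) x := by
    intro T
    have h1 : ∑ z : St N, (tmat (p δ) ^ (T + 1)) ξ z * hatx π z
        = ∑ x : St N, (tmat (p δ) ^ T) ξ x * ∑ z : St N, tmat (p δ) x z * hatx π z := by
      simp only [pow_succ, Matrix.mul_apply, Finset.sum_mul]
      rw [Finset.sum_comm]
      refine Finset.sum_congr rfl fun x _ => ?_
      rw [Finset.mul_sum]
      exact Finset.sum_congr rfl fun z _ => by ring
    rw [h1]
    simp only [step_hatx hq1 π, mul_add]
    rw [Finset.sum_add_distrib]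
  -- telescoping
  have htel : ∀ T : ℕ,
      ∑ t ∈ Finset.range T, (∑ x : St N, (tmat (p δ) ^ t) ξ x * dsel π (p δ) x)
        = (∑ x : St N, (tmat (p δ) ^ T) ξ x * hatx π x) - hatx π ξ := by
    intro T
    induction T with
    | zero =>
      simp [Matrix.one_apply, ite_mul, Finset.sum_ite_eq]
    | succ T ih =>
      rw [Finset.sum_range_succ, ih, hstep T]
      ring
  -- limit of the expected RV-weighted frequency
  have htail : Tendsto (fun T => ∑ x ∈ Finset.univ \ ({stA N, stB N} : Finset (St N)),
      (tmat (p δ) ^ T) ξ x * hatx π x) atTop (𝓝 0) := by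
    refine squeeze_zero_norm (fun T => htrb T _ M2 hM2b) ?_
    have := hmu0.const_mul M2
    simpa using this
  have hflim : Tendsto (fun T => ∑ x : St N, (tmat (p δ) ^ T) ξ x * hatx π x) atTop (𝓝 ρ) := by
    have h2 : Tendsto (fun T => (tmat (p δ) ^ T) ξ (stA N) * hatx π (stA N)
        + (tmat (p δ) ^ T) ξ (stB N) * hatx π (stB N)) atTop (𝓝 ρ) := by
      simp only [h1A, h0B, mul_one, mul_zero, add_zero]
      exact hρ
    have h3 := htail.add h2
    rw [zero_add] at h3
    refine Tendsto.congr (fun T => ?_) h3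
    exact (hsplit T (hatx π)).symm
  -- combine the two limits of the partial sums
  have hpart : Tendsto (fun T => ∑ t ∈ Finset.range T,
      (∑ x : St N, (tmat (p δ) ^ t) ξ x * dsel π (p δ) x)) atTop (𝓝 (ρ - hatx π ξ)) := by
    have h4 := hflim.sub (tendsto_const_nhds (x := hatx π ξ))
    exact Tendsto.congr (fun T => (htel T).symm) h4
  have h5 : Tendsto (fun T => ∑ t ∈ Finset.range T,
      (∑ x : St N, (tmat (p δ) ^ t) ξ x * dsel π (p δ) x)) atTop
      (𝓝 (∑' t : ℕ, ∑ x : St N, (tmat (p δ) ^ t) ξ x * dsel π (p δ) x)) :=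
    hsumg.hasSum.tendsto_sum_nat
  have h6 : (∑' t : ℕ, ∑ x : St N, (tmat (p δ) ^ t) ξ x * dsel π (p δ) x) = ρ - hatx π ξ :=
    tendsto_nhds_unique h5 hpart
  have h7 : sgen (p δ) ξ (dsel π (p δ))
      = ∑' t : ℕ, ∑ x : St N, (tmat (p δ) ^ t) ξ x * dsel π (p δ) x := rfl
  rw [h7, h6]
  ring

end Evo
end
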